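/- arXiv:2408.14999 — 4 statements merged into one kernel-verified Lean document; each statement's English description precedes it below -/
import Mathlib

section
/- In any SRKAM, (b ⋆ a⋄) ⊓ (c ⋆ a⋄) ≤ (b ⊓ c) ⋆ a⋄. -/
/-- A right-skewed Kleene algebra with distributive meets (SRKAM):
a bounded distributive lattice with a monotone monoid operation `star`
(unit `one`), an iteration `diam`, satisfying the SRKAM axioms. -/
class SRKAM (α : Type*) extends DistribLattice α, BoundedOrder α where
  one : α
  star : α → α → α
  diam : α → α
  star_assoc : ∀ a b c : α, star (star a b) c = star a (star b c)
  one_star : ∀ a : α, star one a = a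
  star_one : ∀ a : α, star a one = a
  star_mono : ∀ a a' b b' : α, a ≤ a' → b ≤ b' → star a b ≤ star a' b'
  star_bot : ∀ a : α, star a ⊥ ≤ ⊥
  le_star_top : ∀ a : α, ⊤ ≤ star a ⊤
  star_sup_le : ∀ a b c : α, star a (b ⊔ c) ≤ star a b ⊔ star a c
  inf_le_star_inf : ∀ a b c : α, star a b ⊓ star a c ≤ star a (b ⊓ c)
  star_half_dist : ∀ a b c : α, star a b ⊓ c ≤ star (a ⊓ c) b
  one_le_diam : ∀ a : α, one ≤ diam a
  diam_star_le : ∀ a : α, star (diam a) a ≤ diam a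
  diam_ind : ∀ a b c : α, a ⊓ star b c ≤ b → a ⊓ star b (diam c) ≤ b

open SRKAM

/-- In any SRKAM, (b ⋆ a⋄) ⊓ (c ⋆ a⋄) ≤ (b ⊓ c) ⋆ a⋄. -/
theorem srkam_inf_star_diam {α : Type*} [SRKAM α] (a b c : α) :
    star b (diam a) ⊓ star c (diam a) ≤ star (b ⊓ c) (diam a) := by
  have hdd : star (diam a) (diam a) ≤ diam a := by
    have := diam_ind (⊤ : α) (diam a) a (by simpa using diam_star_le a)
    simpa using this
  have h1 : star b (diam a) ⊓ star c (diam a) ≤ star (c ⊓ star b (diam a)) (diam a) := by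
    rw [inf_comm]
    exact star_half_dist c (diam a) (star b (diam a))
  have h2 : c ⊓ star b (diam a) ≤ star (b ⊓ c) (diam a) := by
    rw [inf_comm]
    exact star_half_dist b (diam a) c
  calc star b (diam a) ⊓ star c (diam a)
      ≤ star (c ⊓ star b (diam a)) (diam a) := h1
    _ ≤ star (star (b ⊓ c) (diam a)) (diam a) := star_mono _ _ _ _ h2 le_rfl
    _ = star (b ⊓ c) (star (diam a) (diam a)) := star_assoc _ _ _
    _ ≤ star (b ⊓ c) (diam a) := star_mono _ _ _ _ le_rfl hdd
end

section
/- In any SRKAM, a⋄ ⊓ b⋄ ≤ (a ⊓ b)⋄. -/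
open SRKAM

/-- In any SRKAM, a⋄ ⊓ b⋄ ≤ (a ⊓ b)⋄. -/
theorem srkam_diam_inf_diam {α : Type*} [SRKAM α] (a b : α) :
    diam a ⊓ diam b ≤ diam (a ⊓ b) := by
  set d := diam (a ⊓ b) with hd
  have h0 : star d b ⊓ star d a ≤ d := by
    calc star d b ⊓ star d a ≤ star d (b ⊓ a) := inf_le_star_inf d b a
    _ ≤ star d (a ⊓ b) := star_mono _ _ _ _ le_rfl (inf_comm b a).le
    _ ≤ d := diam_star_le (a ⊓ b)
  have h1 : star d b ⊓ star d (diam a) ≤ d := diam_ind _ _ _ h0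
  have h2 : star d (diam a) ⊓ star d (diam b) ≤ d := by
    apply diam_ind
    rw [inf_comm]; exact h1
  refine le_trans ?_ h2
  have hx : ∀ x : α, x ≤ star d x := fun x => by
    calc x = star one x := (one_star x).symm
    _ ≤ star d x := star_mono _ _ _ _ (one_le_diam _) le_rfl
  exact inf_le_inf (hx _) (hx _)
end

section
/- In any SRKAM, for i = ⊓_{b∈Γ}(⊤ ⋆ b) (a finite meet over a set Γ of elements), we have i = a ⋆ i for every a; consequently i ⊓ (a ⋆ b) = a ⋆ (i ⊓ b). -/
open SRKAM

/-- For i = ⊓_{b ∈ Γ} (⊤ ⋆ b) a finite meet, i = a ⋆ i for every a, and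
consequently i ⊓ (a ⋆ b) = a ⋆ (i ⊓ b). -/
theorem srkam_finite_meet_top_star {α : Type*} [SRKAM α] (Γ : Finset α)
    (i : α) (hi : i = Γ.inf (fun b => star (⊤ : α) b)) :
    ∀ a b : α, i = star a i ∧ i ⊓ star a b = star a (i ⊓ b) := by
  -- key: a ⋆ (⊤ ⋆ b) = ⊤ ⋆ b
  have key : ∀ a b : α, star a (star (⊤ : α) b) = star (⊤ : α) b := by
    intro a b
    apply le_antisymm
    · calc star a (star (⊤ : α) b) ≤ star ⊤ (star ⊤ b) :=
            star_mono _ _ _ _ le_top le_rfl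
        _ = star (star ⊤ ⊤) b := (star_assoc _ _ _).symm
        _ ≤ star ⊤ b := star_mono _ _ _ _ le_top le_rfl
    · calc star (⊤ : α) b ≤ star (star a ⊤) b := star_mono _ _ _ _ (le_star_top a) le_rfl
        _ = star a (star ⊤ b) := star_assoc _ _ _
  have hle : ∀ (Γ : Finset α) (a : α), Γ.inf (fun b => star (⊤ : α) b) ≤
      star a (Γ.inf (fun b => star (⊤ : α) b)) := by
    intro Γ a
    clear hi
    induction Γ using Finset.cons_induction with
    | empty => simpa using le_star_top a
    | cons x s hx ih =>
        simp only [Finset.inf_cons]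
        calc star (⊤:α) x ⊓ s.inf (fun b => star (⊤:α) b)
            ≤ star a (star (⊤:α) x) ⊓ star a (s.inf (fun b => star (⊤:α) b)) :=
              inf_le_inf (key a x).ge ih
          _ ≤ star a (star (⊤:α) x ⊓ s.inf (fun b => star (⊤:α) b)) :=
              inf_le_star_inf _ _ _
  have hge : ∀ a : α, star a (Γ.inf (fun b => star (⊤ : α) b)) ≤
      Γ.inf (fun b => star (⊤ : α) b) := by
    intro a
    apply Finset.le_inf
    intro x hx
    calc star a (Γ.inf fun b => star (⊤:α) b) ≤ star a (star (⊤:α) x) :=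
          star_mono _ _ _ _ le_rfl (Finset.inf_le hx)
      _ = star (⊤:α) x := key a x
  intro a b
  have hfix : i = star a i := by rw [hi]; exact le_antisymm (hle Γ a) (hge a)
  refine ⟨hfix, le_antisymm ?_ ?_⟩
  · calc i ⊓ star a b = star a i ⊓ star a b := by rw [← hfix]
      _ ≤ star a (i ⊓ b) := inf_le_star_inf _ _ _
  · exact le_inf (le_trans (star_mono _ _ _ _ le_rfl inf_le_left) hfix.ge)
      (star_mono _ _ _ _ le_rfl inf_le_right)
end

section
/- In any SRKAM, the pair of maps (x ↦ 1 ⊓ x, y ↦ ⊤ ⋆ y) forms a Galois connection: for all e, f, one has 1 ⊓ e ≤ f if and only if e ≤ ⊤ ⋆ f. In particular e ≤ ⊤ ⋆ (1 ⊓ e) and 1 ⊓ (⊤ ⋆ f) ≤ f. -/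
open SRKAM

/-- (1 ⊓ -, ⊤ ⋆ -) is a Galois connection: 1 ⊓ e ≤ f ↔ e ≤ ⊤ ⋆ f;
in particular e ≤ ⊤ ⋆ (1 ⊓ e) and 1 ⊓ (⊤ ⋆ f) ≤ f. -/
theorem srkam_galois {α : Type*} [SRKAM α] :
    ∀ e f : α,
      ((one : α) ⊓ e ≤ f ↔ e ≤ star ⊤ f) ∧
      e ≤ star ⊤ ((one : α) ⊓ e) ∧
      (one : α) ⊓ star ⊤ f ≤ f := by
  have counit : ∀ f : α, (one : α) ⊓ star ⊤ f ≤ f := by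
    intro f
    calc (one : α) ⊓ star ⊤ f = star ⊤ f ⊓ one := inf_comm _ _
    _ ≤ star (⊤ ⊓ one) f := star_half_dist _ _ _
    _ = star one f := by rw [top_inf_eq]
    _ = f := one_star f
  have unit : ∀ e : α, e ≤ star ⊤ ((one : α) ⊓ e) := by
    intro e
    have h1 : e ≤ star ⊤ (one : α) := by
      rw [SRKAM.star_one]; exact le_top
    have h2 : e ≤ star ⊤ e := by
      calc e = star one e := (one_star e).symm
      _ ≤ star ⊤ e := star_mono _ _ _ _ le_top le_rfl
    exact le_trans (le_inf h1 h2) (inf_le_star_inf _ _ _)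
  intro e f
  refine ⟨⟨fun h => le_trans (unit e) (star_mono _ _ _ _ le_rfl h),
    fun h => le_trans (inf_le_inf_left _ h) (counit f)⟩, unit e, counit f⟩
end
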